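/- For sequential components, DNI is preserved by branching bisimilarity: if s1 and s2 are places of a finite-state machine N with s1 ≈ s2, and the singleton marking s1 satisfies DNI, then the singleton marking s2 satisfies DNI. -/
import Mathlib


/- Common framework: finite-state machines (FSMs) in the sense of Gorrieri.
   Places form a type `S`, labels a type `A` with a distinguished silent label `tau`.
   A transition is a triple `(s, ℓ, m) : S × A × Option S`, where the post-set `m`
   is either a single place (`some s'`) or the empty marking θ (`none`).
   An FSM is given by a finite set `T` of such transitions. -/

variable {S A : Type*}

/-- `Tr T s ℓ m` : place `s` has a transition labeled `ℓ` to post-set `m` (a place or θ). -/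
def Tr (T : Finset (S × A × Option S)) (s : S) (ℓ : A) (m : Option S) : Prop :=
  (s, ℓ, m) ∈ T

/-- `SilentReach T tau s m` : `s ⇒ε m`, the reflexive–transitive closure of silent moves. -/
inductive SilentReach (T : Finset (S × A × Option S)) (tau : A) : S → Option S → Prop
  | refl (s : S) : SilentReach T tau s (some s)
  | step {s s' : S} {m : Option S} :
      SilentReach T tau s (some s') → Tr T s' tau m → SilentReach T tau s m

/-- Lift of a place relation to `Option S`; a pair involving θ (`none`) is related
    only when both components are θ. -/
def OptRel (R : S → S → Prop) : Option S → Option S → Prop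
  | some a, some b => R a b
  | none, none => True
  | _, _ => False

/-- `R` is a branching bisimulation on the FSM with transitions `T` and silent label `tau`. -/
def IsBranchingBisim (T : Finset (S × A × Option S)) (tau : A) (R : S → S → Prop) : Prop :=
  ∀ s1 s2, R s1 s2 →
    (∀ ℓ m1, Tr T s1 ℓ m1 →
        (ℓ = tau ∧ ∃ m2, SilentReach T tau s2 m2 ∧ OptRel R (some s1) m2 ∧ OptRel R m1 m2) ∨
        (∃ s m2, SilentReach T tau s2 (some s) ∧ Tr T s ℓ m2 ∧ R s1 s ∧ OptRel R m1 m2)) ∧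
    (∀ ℓ m2, Tr T s2 ℓ m2 →
        (ℓ = tau ∧ ∃ m1, SilentReach T tau s1 m1 ∧ OptRel R m1 (some s2) ∧ OptRel R m1 m2) ∨
        (∃ s m1, SilentReach T tau s1 (some s) ∧ Tr T s ℓ m1 ∧ R s s2 ∧ OptRel R m1 m2))

/-- Branching bisimilarity on places: `s ≈ s'` iff some branching bisimulation relates them. -/
def Bisimilar (T : Finset (S × A × Option S)) (tau : A) (s s' : S) : Prop :=
  ∃ R, IsBranchingBisim T tau R ∧ R s s'

/-- Rooted branching bisimilarity `≈_c` on places. -/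
def RootedBisimilar (T : Finset (S × A × Option S)) (tau : A) (s1 s2 : S) : Prop :=
  ∀ ℓ : A,
    (∀ m1, Tr T s1 ℓ m1 → ∃ m2, Tr T s2 ℓ m2 ∧ OptRel (Bisimilar T tau) m1 m2) ∧
    (∀ m2, Tr T s2 ℓ m2 → ∃ m1, Tr T s1 ℓ m1 ∧ OptRel (Bisimilar T tau) m1 m2)

/-- The post-set of a transition, as a marking (multiset). -/
def mpost (m : Option S) : Multiset S :=
  m.elim 0 (fun s => {s})

variable [DecidableEq S] [DecidableEq A]

/-- `Fires T m t m'` : transition `t` is enabled at marking `m` (`•t ∈ m`) and its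
    firing produces `m' = (m ⊖ •t) ⊕ t•`. -/
def Fires (T : Finset (S × A × Option S)) (m : Multiset S) (t : S × A × Option S)
    (m' : Multiset S) : Prop :=
  t ∈ T ∧ t.1 ∈ m ∧ m' = m.erase t.1 + mpost t.2.2

/-- `MStep T m ℓ m'` : marking `m` evolves to `m'` by firing some `ℓ`-labeled transition. -/
def MStep (T : Finset (S × A × Option S)) (m : Multiset S) (ℓ : A) (m' : Multiset S) : Prop :=
  ∃ t, Fires T m t m' ∧ t.2.1 = ℓ

/-- `Reach T m m'` : `m' ∈ reach(m)`, i.e. `m'` is reachable from `m` by a firing sequence. -/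
def Reach (T : Finset (S × A × Option S)) : Multiset S → Multiset S → Prop :=
  Relation.ReflTransGen (fun m m' => ∃ t, Fires T m t m')

/-- The additive closure `R^⊕` of a place relation `R`, relating markings. -/
inductive AddClosure (R : S → S → Prop) : Multiset S → Multiset S → Prop
  | zero : AddClosure R 0 0
  | cons {s1 s2 : S} {m1 m2 : Multiset S} :
      R s1 s2 → AddClosure R m1 m2 → AddClosure R (s1 ::ₘ m1) (s2 ::ₘ m2)

/-- The restricted net `N \ H`: all transitions with a label in `H` are pruned.
    (Places `s\H` of the restricted net are identified with the places `s` of `N`.) -/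
def restrictNet (T : Finset (S × A × Option S)) (H : Finset A) : Finset (S × A × Option S) :=
  T.filter (fun t => t.2.1 ∉ H)

/-- `DNI T tau H m0` : for all markings `m1, m2` reachable from `m0` and every `h ∈ H`
    with `m1 →h m2`, the restricted markings are branching team equivalent in `N \ H`. -/
def DNI (T : Finset (S × A × Option S)) (tau : A) (H : Finset A) (m0 : Multiset S) : Prop :=
  ∀ m1 m2, Reach T m0 m1 → Reach T m0 m2 →
    ∀ h ∈ H, MStep T m1 h m2 → AddClosure (Bisimilar (restrictNet T H) tau) m1 m2

/-- `FiresSeq T m σ m'` : the transition sequence `σ` can fire from `m` ending in `m'`. -/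
inductive FiresSeq (T : Finset (S × A × Option S)) : Multiset S → List (S × A × Option S) → Multiset S → Prop
  | nil (m : Multiset S) : FiresSeq T m [] m
  | cons {m m' m'' : Multiset S} {t : S × A × Option S} {σ : List (S × A × Option S)} :
      Fires T m t m' → FiresSeq T m' σ m'' → FiresSeq T m (t :: σ) m''

section AuxLemmas

variable {T : Finset (S × A × Option S)} {tau : A} {H : Finset A}

lemma optRel_flip {R : S → S → Prop} {a b : Option S}
    (h : OptRel R a b) : OptRel (fun x y => R y x) b a := by
  cases a <;> cases b <;> simp_all [OptRel]

lemma optRel_comp {R1 R2 : S → S → Prop} {m1 m2 m3 : Option S}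
    (h1 : OptRel R1 m1 m2) (h2 : OptRel R2 m2 m3) :
    OptRel (fun a c => ∃ b, R1 a b ∧ R2 b c) m1 m3 := by
  cases m1 <;> cases m2 <;> cases m3 <;> simp_all [OptRel]
  exact ⟨_, h1, h2⟩

lemma optRel_flip_comp {R1 R2 : S → S → Prop} {m m' : Option S}
    (h : OptRel (fun a c => ∃ b, R2 b a ∧ R1 c b) m m') :
    OptRel (fun a c => ∃ b, R1 a b ∧ R2 b c) m' m := by
  cases m <;> cases m' <;> simp_all [OptRel]
  tauto

lemma optRel_some_left {R : S → S → Prop} {a : S} {m : Option S}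
    (h : OptRel R (some a) m) : ∃ b, m = some b ∧ R a b := by
  cases m <;> simp_all [OptRel]

lemma optRel_some_right {R : S → S → Prop} {m : Option S} {b : S}
    (h : OptRel R m (some b)) : ∃ a, m = some a ∧ R a b := by
  cases m <;> simp_all [OptRel]

lemma silentReach_trans {a b : S} {m : Option S}
    (h1 : SilentReach T tau a (some b)) (h2 : SilentReach T tau b m) :
    SilentReach T tau a m := by
  induction h2 with
  | refl => exact h1
  | step hr ht ih => exact SilentReach.step ih ht

/-- An isBranchingBisim's flip is a branching bisimulation. -/
lemma isBranchingBisim_flip {R : S → S → Prop}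
    (hR : IsBranchingBisim T tau R) :
    IsBranchingBisim T tau (fun a b => R b a) := by
  intro s1 s2 hr
  obtain ⟨h1, h2⟩ := hR s2 s1 hr
  constructor
  · intro ℓ m1 htr
    rcases h2 ℓ m1 htr with ⟨hℓ, m2, hsr, ho1, ho2⟩ | ⟨s, m2, hsr, htr', hrel, ho⟩
    · exact Or.inl ⟨hℓ, m2, hsr, optRel_flip ho1, optRel_flip ho2⟩
    · exact Or.inr ⟨s, m2, hsr, htr', hrel, optRel_flip ho⟩
  · intro ℓ m2 htr
    rcases h1 ℓ m2 htr with ⟨hℓ, m1, hsr, ho1, ho2⟩ | ⟨s, m1, hsr, htr', hrel, ho⟩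
    · exact Or.inl ⟨hℓ, m1, hsr, optRel_flip ho1, optRel_flip ho2⟩
    · exact Or.inr ⟨s, m1, hsr, htr', hrel, optRel_flip ho⟩

/-- Matching of silent sequences across a branching bisimulation. -/
lemma silent_match {R : S → S → Prop} (hR : IsBranchingBisim T tau R)
    {s2 : S} {m : Option S} (h : SilentReach T tau s2 m) :
    ∀ {s3 : S}, R s2 s3 → ∃ m', SilentReach T tau s3 m' ∧ OptRel R m m' := by
  induction h with
  | refl => exact fun {s3} hr => ⟨some s3, SilentReach.refl s3, hr⟩
  | @step s' m hreach htr ih =>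
    intro s3 hr
    obtain ⟨m', hsr, hrel⟩ := ih hr
    obtain ⟨u3, rfl, hru⟩ := optRel_some_left hrel
    rcases (hR s' u3 hru).1 tau m htr with ⟨_, m2, hsr2, _, ho2⟩ | ⟨s'', m2, hsr2, htr2, _, ho2⟩
    · exact ⟨m2, silentReach_trans hsr hsr2, ho2⟩
    · exact ⟨m2, SilentReach.step (silentReach_trans hsr hsr2) htr2, ho2⟩

/-- Composition of branching bisimulations is a branching bisimulation
    (works since the definition is in semi-branching style). -/
lemma isBranchingBisim_comp {R1 R2 : S → S → Prop}
    (hR1 : IsBranchingBisim T tau R1) (hR2 : IsBranchingBisim T tau R2) :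
    IsBranchingBisim T tau (fun a c => ∃ b, R1 a b ∧ R2 b c) := by
  have main : ∀ {Q1 Q2 : S → S → Prop}, IsBranchingBisim T tau Q1 →
      IsBranchingBisim T tau Q2 →
      ∀ s1 b s3, Q1 s1 b → Q2 b s3 → ∀ ℓ m1, Tr T s1 ℓ m1 →
      (ℓ = tau ∧ ∃ m2, SilentReach T tau s3 m2 ∧
          OptRel (fun a c => ∃ b, Q1 a b ∧ Q2 b c) (some s1) m2 ∧
          OptRel (fun a c => ∃ b, Q1 a b ∧ Q2 b c) m1 m2) ∨
      (∃ s m2, SilentReach T tau s3 (some s) ∧ Tr T s ℓ m2 ∧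
          (∃ b, Q1 s1 b ∧ Q2 b s) ∧
          OptRel (fun a c => ∃ b, Q1 a b ∧ Q2 b c) m1 m2) := by
    intro Q1 Q2 hQ1 hQ2 s1 b s3 h1 h2 ℓ m1 htr
    rcases (hQ1 s1 b h1).1 ℓ m1 htr with ⟨hℓ, m2, hsr, ho1, ho2⟩ | ⟨s, m2, hsr, htr2, hrel, ho⟩
    · -- τ-case via Q1
      obtain ⟨u2, rfl, hru⟩ := optRel_some_left ho1
      obtain ⟨m3, hsr3, ho3⟩ := silent_match hQ2 hsr h2
      obtain ⟨u3, rfl, hru3⟩ := optRel_some_left ho3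
      exact Or.inl ⟨hℓ, some u3, hsr3, ⟨u2, hru, hru3⟩, optRel_comp ho2 ho3⟩
    · -- visible (or stuttered) case via Q1 : b ⇒ε s →ℓ m2
      obtain ⟨m', hsr', ho'⟩ := silent_match hQ2 hsr h2
      obtain ⟨s3', rfl, hrs3⟩ := optRel_some_left ho'
      rcases (hQ2 s s3' hrs3).1 ℓ m2 htr2 with ⟨hℓ, m3, hsr3, ho31, ho32⟩ |
          ⟨s'', m3, hsr3, htr3, hrel3, ho3⟩
      · obtain ⟨u3, rfl, hru3⟩ := optRel_some_left ho31
        exact Or.inl ⟨hℓ, some u3, silentReach_trans hsr' hsr3,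
          ⟨s, hrel, hru3⟩, optRel_comp ho ho32⟩
      · exact Or.inr ⟨s'', m3, silentReach_trans hsr' hsr3, htr3,
          ⟨s, hrel, hrel3⟩, optRel_comp ho ho3⟩
  intro s1 s3 hr
  obtain ⟨b, h1, h2⟩ := hr
  constructor
  · exact main hR1 hR2 s1 b s3 h1 h2
  · intro ℓ m2 htr
    rcases main (isBranchingBisim_flip hR2) (isBranchingBisim_flip hR1) s3 b s1 h2 h1 ℓ m2 htr with
      ⟨hℓ, m1, hsr, ho1, ho2⟩ | ⟨s, m1, hsr, htr', hrel, ho⟩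
    · exact Or.inl ⟨hℓ, m1, hsr, optRel_flip_comp ho1, optRel_flip_comp ho2⟩
    · refine Or.inr ⟨s, m1, hsr, htr', ?_, optRel_flip_comp ho⟩
      obtain ⟨x, hx1, hx2⟩ := hrel
      exact ⟨x, hx2, hx1⟩

lemma bisimilar_symm {a b : S} (h : Bisimilar T tau a b) : Bisimilar T tau b a := by
  obtain ⟨R, hR, hr⟩ := h
  exact ⟨fun x y => R y x, isBranchingBisim_flip hR, hr⟩

lemma bisimilar_trans {a b c : S} (h1 : Bisimilar T tau a b) (h2 : Bisimilar T tau b c) :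
    Bisimilar T tau a c := by
  obtain ⟨R1, hR1, hr1⟩ := h1
  obtain ⟨R2, hR2, hr2⟩ := h2
  exact ⟨_, isBranchingBisim_comp hR1 hR2, ⟨b, hr1, hr2⟩⟩

lemma tr_restrict {s : S} {ℓ : A} {m : Option S} :
    Tr (restrictNet T H) s ℓ m ↔ Tr T s ℓ m ∧ ℓ ∉ H := by
  simp [Tr, restrictNet, Finset.mem_filter]

lemma silentReach_restrict (htau : tau ∉ H) {s : S} {m : Option S}
    (h : SilentReach T tau s m) : SilentReach (restrictNet T H) tau s m := by
  induction h with
  | refl => exact SilentReach.refl _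
  | step hr ht ih => exact SilentReach.step ih (tr_restrict.2 ⟨ht, htau⟩)

/-- Restriction preserves branching bisimulations (for τ ∉ H). -/
lemma isBranchingBisim_restrict (htau : tau ∉ H) {R : S → S → Prop}
    (hR : IsBranchingBisim T tau R) :
    IsBranchingBisim (restrictNet T H) tau R := by
  intro s1 s2 hr
  obtain ⟨h1, h2⟩ := hR s1 s2 hr
  constructor
  · intro ℓ m1 htr
    obtain ⟨htr', hℓ⟩ := tr_restrict.1 htr
    rcases h1 ℓ m1 htr' with ⟨hℓ', m2, hsr, ho1, ho2⟩ | ⟨s, m2, hsr, htr2, hrel, ho⟩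
    · exact Or.inl ⟨hℓ', m2, silentReach_restrict htau hsr, ho1, ho2⟩
    · exact Or.inr ⟨s, m2, silentReach_restrict htau hsr, tr_restrict.2 ⟨htr2, hℓ⟩, hrel, ho⟩
  · intro ℓ m2 htr
    obtain ⟨htr', hℓ⟩ := tr_restrict.1 htr
    rcases h2 ℓ m2 htr' with ⟨hℓ', m1, hsr, ho1, ho2⟩ | ⟨s, m1, hsr, htr2, hrel, ho⟩
    · exact Or.inl ⟨hℓ', m1, silentReach_restrict htau hsr, ho1, ho2⟩
    · exact Or.inr ⟨s, m1, silentReach_restrict htau hsr, tr_restrict.2 ⟨htr2, hℓ⟩, hrel, ho⟩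

lemma bisimilar_restrict (htau : tau ∉ H) {a b : S} (h : Bisimilar T tau a b) :
    Bisimilar (restrictNet T H) tau a b := by
  obtain ⟨R, hR, hr⟩ := h
  exact ⟨R, isBranchingBisim_restrict htau hR, hr⟩

end AuxLemmas

section ReachLemmas

variable [DecidableEq S] [DecidableEq A]
variable {T : Finset (S × A × Option S)} {tau : A}

lemma reach_step {s : S} {ℓ : A} {m : Option S} (h : Tr T s ℓ m) :
    Reach T ({s} : Multiset S) (mpost m) := by
  refine Relation.ReflTransGen.single ⟨(s, ℓ, m), h, ?_, ?_⟩
  · simp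
  · simp

lemma reach_of_silent' {a : S} {m : Option S} (h : SilentReach T tau a m) :
    ∀ b, m = some b → Reach T ({a} : Multiset S) ({b} : Multiset S) := by
  induction h with
  | refl => intro b hb; cases hb; exact Relation.ReflTransGen.refl
  | @step s' m' hr ht ih =>
    intro b hb
    subst hb
    have h1 : Reach T ({a} : Multiset S) ({s'} : Multiset S) := ih s' rfl
    have h2 : Reach T ({s'} : Multiset S) (mpost (some b)) := reach_step ht
    exact h1.trans h2

lemma reach_of_silent {a b : S} (h : SilentReach T tau a (some b)) :
    Reach T ({a} : Multiset S) ({b} : Multiset S) :=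
  reach_of_silent' h b rfl

lemma addClosure_card {R : S → S → Prop} {m m' : Multiset S}
    (h : AddClosure R m m') : Multiset.card m = Multiset.card m' := by
  induction h with
  | zero => rfl
  | cons _ _ ih => simp [ih]

lemma addClosure_singleton {R : S → S → Prop} {m m' : Multiset S} {a b : S}
    (h : AddClosure R m m') (ha : m = {a}) (hb : m' = {b}) : R a b := by
  cases h with
  | zero => simp at ha
  | @cons x y mx my hxy hmm =>
    have hmx : mx = 0 := by
      have := congrArg Multiset.card ha
      simpa using this
    have hmy : my = 0 := by
      have := congrArg Multiset.card hb
      simpa using this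
    subst hmx; subst hmy
    have hxa : x = a := by simpa using ha
    have hyb : y = b := by simpa using hb
    rw [← hxa, ← hyb]
    exact hxy

/-- Key invariant: every marking reachable from `{s2}` is empty or a singleton `{u}`
    which is tracked, via the bisimulation, by a place reachable from `{s1}`. -/
lemma reach_singleton {R : S → S → Prop} (hR : IsBranchingBisim T tau R)
    {s1 s2 : S} (h12 : R s1 s2) {m : Multiset S}
    (hreach : Reach T ({s2} : Multiset S) m) :
    m = 0 ∨ ∃ u w, m = {u} ∧ R w u ∧ Reach T ({s1} : Multiset S) ({w} : Multiset S) := by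
  induction hreach with
  | refl => exact Or.inr ⟨s2, s1, rfl, h12, Relation.ReflTransGen.refl⟩
  | @tail b c hab hbc ih =>
    obtain ⟨t, htT, htm, heq⟩ := hbc
    rcases ih with rfl | ⟨u, w, rfl, hwu, hw⟩
    · simp at htm
    · have ht1 : t.1 = u := by simpa using htm
      have hc : c = mpost t.2.2 := by
        rw [heq, ht1]; simp
      have htr : Tr T u t.2.1 t.2.2 := by
        show (u, t.2.1, t.2.2) ∈ T
        rw [← ht1]
        simpa using htT
      rcases (hR w u hwu).2 t.2.1 t.2.2 htr with
        ⟨hℓ, m1, hsr, ho1, ho2⟩ | ⟨s, m1, hsr, htr2, hrel, ho⟩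
      · obtain ⟨w', rfl, hw'⟩ := optRel_some_right ho1
        rcases hpost : t.2.2 with _ | v
        · rw [hpost] at hc; simp [mpost] at hc; exact Or.inl hc
        · rw [hpost] at ho2 hc
          simp [mpost] at hc
          refine Or.inr ⟨v, w', hc, ho2, hw.trans (reach_of_silent hsr)⟩
      · rcases hpost : t.2.2 with _ | v
        · rw [hpost] at hc; simp [mpost] at hc; exact Or.inl hc
        · rw [hpost] at ho hc
          obtain ⟨w', rfl, hw'⟩ := optRel_some_right ho
          simp [mpost] at hc
          have hst : Reach T ({s1} : Multiset S) ({w'} : Multiset S) :=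
            (hw.trans (reach_of_silent hsr)).trans (reach_step htr2)
          exact Or.inr ⟨v, w', hc, hw', hst⟩

end ReachLemmas

/-- For sequential components, DNI is preserved by branching bisimilarity:
    if `s1 ≈ s2` and the singleton marking `s1` satisfies DNI, so does `s2`. -/
theorem dni_preserved_by_bisimilarity [Fintype S] [Fintype A] [DecidableEq S] [DecidableEq A]
    (T : Finset (S × A × Option S)) (tau : A) (H : Finset A) (htau : tau ∉ H)
    {s1 s2 : S} (hbis : Bisimilar T tau s1 s2)
    (hdni : DNI T tau H ({s1} : Multiset S)) :
    DNI T tau H ({s2} : Multiset S) := by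
  obtain ⟨R, hR, hr12⟩ := hbis
  intro m1 m2 hr1 _hr2 h hH hstep
  obtain ⟨t, ⟨htT, htm, heq⟩, hlab⟩ := hstep
  -- m1 is reachable from {s2}, hence empty or a tracked singleton
  rcases reach_singleton hR hr12 hr1 with rfl | ⟨u2, w, rfl, hwu, hw⟩
  · simp at htm
  have ht1 : t.1 = u2 := by simpa using htm
  have hm2 : m2 = mpost t.2.2 := by rw [heq, ht1]; simp
  have htr : Tr T u2 h t.2.2 := by
    show (u2, h, t.2.2) ∈ T
    rw [← ht1, ← hlab]
    simpa using htT
  have hhtau : h ≠ tau := fun hcon => htau (hcon ▸ hH)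
  rcases (hR w u2 hwu).2 h t.2.2 htr with
    ⟨hℓ, _⟩ | ⟨s', m1', hsr, htr', hrel', ho⟩
  · exact absurd hℓ hhtau
  -- {s1} reaches {s'} and {s'} →h mpost m1'; apply DNI for s1
  have hreachs' : Reach T ({s1} : Multiset S) ({s'} : Multiset S) :=
    hw.trans (reach_of_silent hsr)
  have hreachm1' : Reach T ({s1} : Multiset S) (mpost m1') :=
    hreachs'.trans (reach_step htr')
  have hmstep : MStep T ({s'} : Multiset S) h (mpost m1') := by
    refine ⟨(s', h, m1'), ⟨htr', ?_, ?_⟩, rfl⟩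
    · simp
    · simp
  have HAC := hdni _ _ hreachs' hreachm1' h hH hmstep
  rcases hm1' : m1' with _ | v1
  · -- impossible: AddClosure relates {s'} to the empty marking
    rw [hm1'] at HAC
    have := addClosure_card HAC
    simp [mpost] at this
  · rw [hm1'] at HAC ho
    obtain ⟨v2, hpost, hv12⟩ := optRel_some_left ho
    rw [hpost] at hm2
    have hbis1 : Bisimilar (restrictNet T H) tau s' v1 :=
      addClosure_singleton HAC rfl (by simp [mpost])
    have hbis0 : Bisimilar (restrictNet T H) tau u2 s' :=
      bisimilar_symm (bisimilar_restrict htau ⟨R, hR, hrel'⟩)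
    have hbis2 : Bisimilar (restrictNet T H) tau v1 v2 :=
      bisimilar_restrict htau ⟨R, hR, hv12⟩
    have hfinal : Bisimilar (restrictNet T H) tau u2 v2 :=
      bisimilar_trans (bisimilar_trans hbis0 hbis1) hbis2
    rw [hm2]
    show AddClosure (Bisimilar (restrictNet T H) tau) {u2} (mpost (some v2))
    simp only [mpost, Option.elim]
    exact AddClosure.cons hfinal AddClosure.zero
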